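/- Let α be a cocycle on the invertible ℤ-system Y = (Y, ν, S). Let D_k denote the partition of I into the 2^k dyadic intervals of length 2^{-k}, let P_k = { Y × E : E ∈ D_k } (a partition of Y × I), let μ_y = δ_y ⊗ m be the conditional measure of ν × m on the fiber {y} × I, and write dist_{μ_y}(P, Q) = μ_y{ x : P(x) ≠ Q(x) } for partitions P, Q of Y × I. If for every k ≥ 1 and every ε > 0, ν{ y ∈ Y : dist_{μ_y}(P_k, T_α^{-n}P_k) < ε for infinitely many n ∈ ℕ } = 1, then α is a rigid cocycle. -/

import Mathlib

open MeasureTheory Filter Set Topology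
open scoped ENNReal Classical symmDiff

section NatSlowEntropyDefs

/-- A Følner sequence for the additive semigroup `ℕ`: a sequence of nonempty finite subsets
`F n ⊆ ℕ` with `|(g + Fₙ) ∩ Fₙ| / |Fₙ| → 1` for every `g ∈ ℕ`. -/
def IsFolnerNat (F : ℕ → Finset ℕ) : Prop :=
  (∀ n, (F n).Nonempty) ∧ ∀ g : ℕ,
    Tendsto (fun n => ((((F n).image fun h => g + h) ∩ F n).card : ℝ) / ((F n).card : ℝ))
      atTop (nhds 1)

/-- A rate function: an increasing positive function on `ℕ` tending to infinity. -/
def IsRateFunction (U : ℕ → ℝ) : Prop :=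
  (∀ n, 0 < U n) ∧ Monotone U ∧ Tendsto U atTop atTop

/-- The normalized Hamming distance `d_{P,F}` (for iterates of a single map `T`). -/
noncomputable def hamDistNat {X : Type*} (T : X → X) {r : ℕ} (P : X → Fin r)
    (F : Finset ℕ) (x x' : X) : ℝ :=
  ((F.filter fun f => P (T^[f] x) ≠ P (T^[f] x')).card : ℝ) / (F.card : ℝ)

/-- The set `E` has `d_{P,F}`-diameter at most `ε`. -/
def diamLENat {X : Type*} (T : X → X) {r : ℕ} (P : X → Fin r) (F : Finset ℕ)
    (E : Set X) (ε : ℝ) : Prop :=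
  ∀ x ∈ E, ∀ x' ∈ E, hamDistNat T P F x x' ≤ ε

/-- The Hamming `ε`-covering number `cov(λ, P, F, ε)`. -/
noncomputable def hamCovNat {X : Type*} [MeasurableSpace X] (T : X → X) (lam : Measure X)
    {r : ℕ} (P : X → Fin r) (F : Finset ℕ) (ε : ℝ) : ℕ :=
  sInf {M : ℕ | ∃ E : Fin M → Set X, (∀ i, diamLENat T P F (E i) ε) ∧
    ENNReal.ofReal (1 - ε) ≤ lam (⋃ i, E i)}

/-- The relative Hamming `ε`-covering number `cov(μ, P, F, ε | π)`, defined through the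
disintegration `μy` over a factor map and the factor measure `ν`. -/
noncomputable def hamCovRelNat {X Y : Type*} [MeasurableSpace X] [MeasurableSpace Y]
    (T : X → X) (μy : Y → Measure X) (ν : Measure Y) {r : ℕ} (P : X → Fin r)
    (F : Finset ℕ) (ε : ℝ) : ℕ :=
  sInf {M : ℕ | ∃ S : Set Y, MeasurableSet S ∧ ENNReal.ofReal (1 - ε) ≤ ν S ∧
    ∀ y ∈ S, hamCovNat T (μy y) P F ε ≤ M}

/-- Slow entropy of a partition: `sup_{ε>0} limsup_n cov(μ, P, F_n, ε)/U(|F_n|)`. -/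
noncomputable def slowEntropyPartNat {X : Type*} [MeasurableSpace X] (T : X → X)
    (μ : Measure X) {r : ℕ} (P : X → Fin r) (U : ℕ → ℝ) (F : ℕ → Finset ℕ) : ℝ≥0∞ :=
  ⨆ ε ∈ Ioi (0 : ℝ),
    Filter.limsup (fun n => ENNReal.ofReal ((hamCovNat T μ P (F n) ε : ℝ) / U (F n).card))
      atTop

/-- Slow entropy: the supremum over all finite measurable partitions. -/
noncomputable def slowEntropyNat {X : Type*} [MeasurableSpace X] (T : X → X)
    (μ : Measure X) (U : ℕ → ℝ) (F : ℕ → Finset ℕ) : ℝ≥0∞ :=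
  ⨆ (r : ℕ) (P : X → Fin r) (_ : Measurable P), slowEntropyPartNat T μ P U F

/-- Relative slow entropy of a partition. -/
noncomputable def slowEntropyPartRelNat {X Y : Type*} [MeasurableSpace X] [MeasurableSpace Y]
    (T : X → X) (μy : Y → Measure X) (ν : Measure Y) {r : ℕ} (P : X → Fin r)
    (U : ℕ → ℝ) (F : ℕ → Finset ℕ) : ℝ≥0∞ :=
  ⨆ ε ∈ Ioi (0 : ℝ),
    Filter.limsup
      (fun n => ENNReal.ofReal ((hamCovRelNat T μy ν P (F n) ε : ℝ) / U (F n).card)) atTop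

/-- Relative slow entropy: the supremum over all finite measurable partitions. -/
noncomputable def slowEntropyRelNat {X Y : Type*} [MeasurableSpace X] [MeasurableSpace Y]
    (T : X → X) (μy : Y → Measure X) (ν : Measure Y)
    (U : ℕ → ℝ) (F : ℕ → Finset ℕ) : ℝ≥0∞ :=
  ⨆ (r : ℕ) (P : X → Fin r) (_ : Measurable P), slowEntropyPartRelNat T μy ν P U F

/-- The partition distance `dist_λ(P, Q) = λ{x : P(x) ≠ Q(x)}`. -/
noncomputable def partDist {Z : Type*} [MeasurableSpace Z] (lam : Measure Z)
    {ι : Type*} (P Q : Z → ι) : ℝ≥0∞ :=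
  lam {z | P z ≠ Q z}

/-- A rigid measure-preserving system: there is a sequence `0 < n₁ < n₂ < ⋯` with
`μ(T^{-n_k} A ∆ A) → 0` for every measurable `A`. -/
def IsRigidSystem {X : Type*} [MeasurableSpace X] (T : X → X) (μ : Measure X) : Prop :=
  ∃ n : ℕ → ℕ, StrictMono n ∧ 0 < n 0 ∧
    ∀ A : Set X, MeasurableSet A →
      Tendsto (fun k => μ ((T^[n k] ⁻¹' A) ∆ A)) atTop (nhds 0)

end NatSlowEntropyDefs

section AutIDefs

/-- The group of Lebesgue-measure-preserving (bi-measurable) automorphisms of the unit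
interval; we work with genuine measure-preserving measurable bijections as representatives
of their a.e.-equality classes. -/
def AutI : Type :=
  {φ : unitInterval ≃ᵐ unitInterval // MeasurePreserving φ volume volume}

/-- The skew product map `T_α(y, t) = (S y, α(y) t)` of a cocycle `α : Y → Aut(I,m)`. -/
def skewMap {Y : Type*} (S : Y → Y) (α : Y → AutI) :
    Y × unitInterval → Y × unitInterval :=
  fun p => (S p.1, (α p.1).1 p.2)

/-- The cocycle iterates `α_n(y) = α(S^{n-1} y) ∘ ⋯ ∘ α(S y) ∘ α(y)`, so that
`T_α^n (y,t) = (S^n y, α_n(y) t)`. -/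
def cocIter {Y : Type*} (S : Y → Y) (α : Y → AutI) : ℕ → Y → unitInterval → unitInterval
  | 0, _, t => t
  | n + 1, y, t => cocIter S α n (S y) ((α y).1 t)

/-- Convergence to the identity in the weak topology of `Aut(I,m)`:
`m(φₖ⁻¹ E ∆ E) → 0` for every measurable `E ⊆ I`. -/
def TendstoIdWeak (φ : ℕ → unitInterval → unitInterval) : Prop :=
  ∀ E : Set unitInterval, MeasurableSet E →
    Tendsto (fun k => (volume : Measure unitInterval) ((φ k ⁻¹' E) ∆ E)) atTop (nhds 0)

/-- A rigid cocycle: for `ν`-a.e. `y` there is a (`y`-dependent) strictly increasing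
sequence `(n_k)` with `α_{n_k}(y) → id` weakly. -/
def IsRigidCocycle {Y : Type*} [MeasurableSpace Y] (S : Y → Y) (ν : Measure Y)
    (α : Y → AutI) : Prop :=
  ∀ᵐ y ∂ν, ∃ n : ℕ → ℕ, StrictMono n ∧ TendstoIdWeak fun k => cocIter S α (n k) y

/-- The depth-`k` dyadic partition of the unit interval, as a labeled partition. -/
noncomputable def dyadicLabel (k : ℕ) (t : unitInterval) : Fin (2 ^ k) :=
  ⟨min ⌊(t : ℝ) * 2 ^ k⌋₊ (2 ^ k - 1), by
    have h : 0 < 2 ^ k := pow_pos (by norm_num) k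
    omega⟩

end AutIDefs

/-!
Depth-`k` dyadic intervals have length `2⁻ᵏ`, so by inner and outer regularity every
measurable `E ⊆ I` is `ε`-close to a union `A` of dyadic intervals of some depth `k`. For a
measure-preserving `φ`, `m(φ⁻¹E ∆ E) ≤ 2 m(E ∆ A) + m(φ⁻¹A ∆ A)`, and `φ⁻¹A ∆ A` lies in the
set of points that `φ` moves out of their depth-`k` dyadic interval, whose measure is
`dist_m(D_k, φ⁻¹D_k)`. So `α_{n_m}(y) → id` as soon as `dist_{μ_y}(P_k, T_α^{-n_m} P_k) → 0`
for every `k`; since `D_{m+1}` refines `D_k` for `k ≤ m + 1`, it suffices that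
`dist_{μ_y}(P_{m+1}, T_α^{-n_m} P_{m+1}) < 1/(m+1)`. For a.e. `y` each of these inequalities
holds for infinitely many `n`, and a diagonal extraction makes `(n_m)` strictly increasing.
-/

lemma MeasureTheory.MeasurePreserving.measure_preimage_symmDiff_le {Z : Type*}
    [MeasurableSpace Z] {μ : Measure Z} {φ : Z → Z} (hφ : MeasurePreserving φ μ μ)
    {E A : Set Z} (hE : MeasurableSet E) (hA : MeasurableSet A) :
    μ ((φ ⁻¹' E) ∆ E) ≤ μ (E ∆ A) + μ ((φ ⁻¹' A) ∆ A) + μ (A ∆ E) := by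
  have hpre : μ ((φ ⁻¹' E) ∆ (φ ⁻¹' A)) = μ (E ∆ A) := by
    rw [← preimage_symmDiff, hφ.measure_preimage (hE.symmDiff hA).nullMeasurableSet]
  calc μ ((φ ⁻¹' E) ∆ E)
      ≤ μ ((φ ⁻¹' E) ∆ (φ ⁻¹' A)) + μ ((φ ⁻¹' A) ∆ E) :=
        measure_symmDiff_le _ _ _
    _ ≤ μ ((φ ⁻¹' E) ∆ (φ ⁻¹' A)) + (μ ((φ ⁻¹' A) ∆ A) + μ (A ∆ E)) :=
        by gcongr; exact measure_symmDiff_le _ _ _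
    _ = μ (E ∆ A) + μ ((φ ⁻¹' A) ∆ A) + μ (A ∆ E) := by rw [hpre, add_assoc]

lemma ae_frequently_mem_of_measure_setOf_infinite_eq_one {Y : Type*} [MeasurableSpace Y]
    {ν : Measure Y} [IsProbabilityMeasure ν] {s : ℕ → Set Y} (hs : ∀ n, MeasurableSet (s n))
    (h : ν {y | {n | y ∈ s n}.Infinite} = 1) : ∀ᵐ y ∂ν, ∃ᶠ n in atTop, y ∈ s n := by
  rw [← cofinite.limsup_set_eq, Nat.cofinite_eq_atTop] at h
  have hae : ∀ᵐ y ∂ν, y ∈ limsup s atTop :=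
    (ae_iff_measure_eq (MeasurableSet.measurableSet_limsup hs).nullMeasurableSet).2
      (h.trans measure_univ.symm)
  exact hae.mono fun _ => mem_limsup_iff_frequently_mem.1

lemma measurable_dyadicLabel (k : ℕ) : Measurable (dyadicLabel k) := by
  refine measurable_to_countable' fun i => ?_
  have hval : Measurable fun t : unitInterval => min ⌊(t : ℝ) * 2 ^ k⌋₊ (2 ^ k - 1) :=
    (measurable_subtype_coe.mul_const _).nat_floor.min measurable_const
  have hpre : dyadicLabel k ⁻¹' {i} =
      (fun t : unitInterval => min ⌊(t : ℝ) * 2 ^ k⌋₊ (2 ^ k - 1)) ⁻¹' {i.1} := by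
    ext t
    simp [dyadicLabel, Fin.ext_iff]
  exact hpre ▸ hval (measurableSet_singleton i.1)

lemma dyadicLabel_val_eq_div (k d : ℕ) (t : unitInterval) :
    (dyadicLabel k t : ℕ) = (dyadicLabel (k + d) t : ℕ) / 2 ^ d := by
  have hfloor : ⌊(t : ℝ) * 2 ^ k⌋₊ = ⌊(t : ℝ) * 2 ^ (k + d)⌋₊ / 2 ^ d := by
    rw [← Nat.floor_div_natCast, pow_add]
    push_cast
    field_simp
  have hk : 1 ≤ 2 ^ k := Nat.one_le_two_pow
  have hd : 1 ≤ 2 ^ d := Nat.one_le_two_pow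
  have hmul := Nat.le_mul_of_pos_left (2 ^ d) hk
  have htop : (2 ^ (k + d) - 1) / 2 ^ d = 2 ^ k - 1 := by
    rw [pow_add]
    exact Nat.div_eq_of_lt_le (by rw [Nat.sub_one_mul]; omega)
      (by rw [Nat.sub_add_cancel hk]; omega)
  have hdiv_min := (show Monotone fun n : ℕ => n / 2 ^ d from
    fun _ _ h => Nat.div_le_div_right h).map_min
    (a := ⌊(t : ℝ) * 2 ^ (k + d)⌋₊) (b := 2 ^ (k + d) - 1)
  simp only [dyadicLabel, hdiv_min, hfloor, htop]

lemma dyadicLabel_eq_of_le {k k' : ℕ} (h : k ≤ k') {t t' : unitInterval}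
    (he : dyadicLabel k' t = dyadicLabel k' t') : dyadicLabel k t = dyadicLabel k t' := by
  obtain ⟨d, rfl⟩ := Nat.exists_eq_add_of_le h
  rw [Fin.ext_iff, dyadicLabel_val_eq_div k d t, dyadicLabel_val_eq_div k d t', he]

lemma coe_mul_two_pow_mem_Icc_dyadicLabel (k : ℕ) (t : unitInterval) :
    (t : ℝ) * 2 ^ k ∈ Icc ((dyadicLabel k t : ℕ) : ℝ) ((dyadicLabel k t : ℕ) + 1) := by
  have hpow : (0 : ℝ) < 2 ^ k := by positivity
  have hnonneg : 0 ≤ (t : ℝ) * 2 ^ k := mul_nonneg t.2.1 hpow.le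
  have hle : (t : ℝ) * 2 ^ k ≤ 2 ^ k := by nlinarith [t.2.2]
  simp only [dyadicLabel]
  rcases le_total ⌊(t : ℝ) * 2 ^ k⌋₊ (2 ^ k - 1) with hc | hc
  · rw [min_eq_left hc]
    exact ⟨Nat.floor_le hnonneg, (Nat.lt_floor_add_one _).le⟩
  · rw [min_eq_right hc]
    have hfl : ((2 ^ k - 1 : ℕ) : ℝ) ≤ t * 2 ^ k :=
      (Nat.cast_le.2 hc).trans (Nat.floor_le hnonneg)
    push_cast [Nat.one_le_two_pow] at hfl ⊢
    constructor <;> linarith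

lemma abs_sub_le_of_dyadicLabel_eq {k : ℕ} {t t' : unitInterval}
    (h : dyadicLabel k t = dyadicLabel k t') : |(t : ℝ) - t'| ≤ (2 ^ k)⁻¹ := by
  obtain ⟨h₁, h₂⟩ := coe_mul_two_pow_mem_Icc_dyadicLabel k t
  obtain ⟨h₃, h₄⟩ := coe_mul_two_pow_mem_Icc_dyadicLabel k t'
  rw [h] at h₁ h₂
  have hpow : (0 : ℝ) < 2 ^ k := by positivity
  rw [abs_sub_le_iff, ← one_div, le_div_iff₀ hpow, le_div_iff₀ hpow]
  constructor <;> nlinarith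

lemma exists_symmDiff_dyadicLabel_preimage_lt {E : Set unitInterval} (hE : MeasurableSet E)
    {ε : ℝ≥0∞} (hε : ε ≠ 0) :
    ∃ (k : ℕ) (J : Set (Fin (2 ^ k))), volume (E ∆ (dyadicLabel k ⁻¹' J)) < ε := by
  have hε₂ : ε / 2 ≠ 0 := (ENNReal.half_pos hε).ne'
  obtain ⟨K, hKE, hK, hEK⟩ := hE.exists_isCompact_sdiff_lt (measure_ne_top volume E) hε₂
  obtain ⟨U, hEU, hU, -, hUE⟩ := hE.exists_isOpen_sdiff_lt (measure_ne_top volume E) hε₂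
  obtain ⟨δ, hδ, hKδU⟩ := hK.exists_thickening_subset_open hU (hKE.trans hEU)
  obtain ⟨k, hk⟩ : ∃ k : ℕ, ((1 : ℝ) / 2) ^ k < δ :=
    exists_pow_lt_of_lt_one hδ (by norm_num)
  refine ⟨k, dyadicLabel k '' K, ?_⟩
  -- dyadic intervals of depth `k` have length `2⁻ᵏ < δ`
  have hAU : dyadicLabel k ⁻¹' (dyadicLabel k '' K) ⊆ U := by
    rintro t ⟨x, hxK, hxt⟩
    refine hKδU (Metric.mem_thickening_iff.2 ⟨x, hxK, ?_⟩)
    rw [Subtype.dist_eq, Real.dist_eq]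
    calc |(t : ℝ) - x| ≤ (2 ^ k)⁻¹ := abs_sub_le_of_dyadicLabel_eq hxt.symm
      _ = (1 / 2) ^ k := by rw [one_div, inv_pow]
      _ < δ := hk
  have hsub : E ∆ (dyadicLabel k ⁻¹' (dyadicLabel k '' K)) ⊆ (E \ K) ∪ (U \ E) := by
    rw [Set.symmDiff_def]
    exact union_subset_union (sdiff_subset_sdiff_right (subset_preimage_image _ _))
      (sdiff_subset_sdiff_left hAU)
  calc volume (E ∆ (dyadicLabel k ⁻¹' (dyadicLabel k '' K)))
      ≤ volume (E \ K) + volume (U \ E) := (measure_mono hsub).trans (measure_union_le _ _)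
    _ < ε / 2 + ε / 2 := ENNReal.add_lt_add hEK hUE
    _ = ε := ENNReal.add_halves ε

-- `volume (dyadicMismatch k φ)` is the partition distance `dist_m(D_k, φ⁻¹ D_k)`.
def dyadicMismatch (k : ℕ) (φ : unitInterval → unitInterval) : Set unitInterval :=
  {t | dyadicLabel k t ≠ dyadicLabel k (φ t)}

lemma dyadicMismatch_mono {k k' : ℕ} (h : k ≤ k') (φ : unitInterval → unitInterval) :
    dyadicMismatch k φ ⊆ dyadicMismatch k' φ :=
  fun _ ht he => ht (dyadicLabel_eq_of_le h he)

lemma preimage_symmDiff_subset_dyadicMismatch (k : ℕ) (J : Set (Fin (2 ^ k)))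
    (φ : unitInterval → unitInterval) :
    (φ ⁻¹' (dyadicLabel k ⁻¹' J)) ∆ (dyadicLabel k ⁻¹' J) ⊆ dyadicMismatch k φ := by
  intro t ht he
  rw [Set.mem_symmDiff] at ht
  simp only [mem_preimage, he] at ht
  tauto

lemma tendstoIdWeak_of_tendsto_dyadicMismatch {φ : ℕ → unitInterval → unitInterval}
    (hφ : ∀ n, MeasurePreserving (φ n) volume volume)
    (h : ∀ k, Tendsto (fun n => volume (dyadicMismatch k (φ n))) atTop (𝓝 0)) :
    TendstoIdWeak φ := by
  intro E hE
  rw [ENNReal.tendsto_nhds_zero]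
  intro ε hε
  have hε₃ : 0 < ε / 3 := ENNReal.div_pos hε.ne' ENNReal.ofNat_ne_top
  obtain ⟨k, J, hJ⟩ := exists_symmDiff_dyadicLabel_preimage_lt hE hε₃.ne'
  set A := dyadicLabel k ⁻¹' J
  have hA : MeasurableSet A := measurable_dyadicLabel k J.toFinite.measurableSet
  filter_upwards [ENNReal.tendsto_nhds_zero.1 (h k) (ε / 3) hε₃] with n hn
  calc volume ((φ n ⁻¹' E) ∆ E)
      ≤ volume (E ∆ A) + volume ((φ n ⁻¹' A) ∆ A) + volume (A ∆ E) :=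
        (hφ n).measure_preimage_symmDiff_le hE hA
    _ ≤ ε / 3 + ε / 3 + ε / 3 := by
        refine add_le_add (add_le_add hJ.le ?_) (symmDiff_comm E A ▸ hJ.le)
        exact (measure_mono (preimage_symmDiff_subset_dyadicMismatch k J (φ n))).trans hn
    _ = ε := ENNReal.add_thirds ε

section Cocycle

variable {Y : Type*} (S : Y → Y) (α : Y → AutI)

lemma skewMap_iterate_apply (n : ℕ) (y : Y) (t : unitInterval) :
    (skewMap S α)^[n] (y, t) = (S^[n] y, cocIter S α n y t) := by
  induction n generalizing y t with
  | zero => rfl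
  | succ n ih => exact ih (S y) ((α y).1 t)

lemma measurePreserving_cocIter (n : ℕ) (y : Y) :
    MeasurePreserving (cocIter S α n y) volume volume := by
  induction n generalizing y with
  | zero => exact MeasurePreserving.id _
  | succ n ih => exact (ih (S y)).comp (α y).2

lemma preimage_prodMk_setOf_dyadicLabel_ne_iterate (k n : ℕ) (y : Y) :
    Prod.mk y ⁻¹' {p | dyadicLabel k p.2 ≠ dyadicLabel k ((skewMap S α)^[n] p).2} =
      dyadicMismatch k (cocIter S α n y) := by
  ext t
  simp only [mem_preimage, mem_ofPred_eq, skewMap_iterate_apply, dyadicMismatch]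

variable [MeasurableSpace Y] {S α}

lemma measurableSet_setOf_dyadicLabel_ne_iterate (hα : Measurable (skewMap S α)) (k n : ℕ) :
    MeasurableSet {p | dyadicLabel k p.2 ≠ dyadicLabel k ((skewMap S α)^[n] p).2} :=
  (measurableSet_eq_fun ((measurable_dyadicLabel k).comp measurable_snd)
    ((measurable_dyadicLabel k).comp (measurable_snd.comp (hα.iterate n)))).compl

lemma partDist_dirac_prod_skewMap_iterate (hα : Measurable (skewMap S α)) (k n : ℕ) (y : Y) :
    partDist ((Measure.dirac y).prod volume)
      (fun p : Y × unitInterval => dyadicLabel k p.2)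
      (fun p : Y × unitInterval => dyadicLabel k (((skewMap S α)^[n] p).2)) =
      volume (dyadicMismatch k (cocIter S α n y)) := by
  rw [partDist, Measure.dirac_prod,
    Measure.map_apply measurable_prodMk_left (measurableSet_setOf_dyadicLabel_ne_iterate hα k n),
    preimage_prodMk_setOf_dyadicLabel_ne_iterate]

lemma measurable_volume_dyadicMismatch_cocIter (hα : Measurable (skewMap S α)) (k n : ℕ) :
    Measurable fun y => volume (dyadicMismatch k (cocIter S α n y)) := by
  simpa only [preimage_prodMk_setOf_dyadicLabel_ne_iterate] using
    measurable_measure_prodMk_left (measurableSet_setOf_dyadicLabel_ne_iterate hα k n)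

end Cocycle

theorem rigidity_diagonalization_general
    {Y : Type*} [MeasurableSpace Y]
    (ν : Measure Y) [IsProbabilityMeasure ν]
    (S : Y ≃ᵐ Y)
    (α : Y → AutI) (hα : Measurable (skewMap (⇑S) α))
    (hyp : ∀ k : ℕ, 1 ≤ k → ∀ ε : ℝ, 0 < ε →
      ν {y : Y |
        {n : ℕ |
          partDist ((Measure.dirac y).prod volume)
            (fun p : Y × unitInterval => dyadicLabel k p.2)
            (fun p : Y × unitInterval => dyadicLabel k (((skewMap (⇑S) α)^[n] p).2)) <
          ENNReal.ofReal ε}.Infinite} = 1) :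
    IsRigidCocycle (⇑S) ν α := by
  set δ : ℕ → ℝ := fun m => 1 / (m + 1)
  have hfreq : ∀ m, ∀ᵐ y ∂ν, ∃ᶠ n in atTop,
      volume (dyadicMismatch (m + 1) (cocIter S α n y)) < ENNReal.ofReal (δ m) := by
    intro m
    refine ae_frequently_mem_of_measure_setOf_infinite_eq_one
      (s := fun n => {y | volume (dyadicMismatch (m + 1) (cocIter S α n y)) <
        ENNReal.ofReal (δ m)})
      (fun n => measurable_volume_dyadicMismatch_cocIter hα (m + 1) n measurableSet_Iio) ?_
    simpa only [partDist_dirac_prod_skewMap_iterate hα, mem_ofPred_eq] using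
      hyp (m + 1) (Nat.le_add_left 1 m) (δ m) Nat.one_div_pos_of_nat
  filter_upwards [ae_all_iff.2 hfreq] with y hy
  obtain ⟨n, hn_mono, hn⟩ := extraction_forall_of_frequently hy
  refine ⟨n, hn_mono, tendstoIdWeak_of_tendsto_dyadicMismatch
    (fun m => measurePreserving_cocIter S α (n m) y) fun k => ?_⟩
  have hδ : Tendsto (fun m => ENNReal.ofReal (δ m)) atTop (𝓝 0) :=
    ENNReal.ofReal_zero ▸ ENNReal.tendsto_ofReal tendsto_one_div_add_atTop_nhds_zero_nat
  refine tendsto_of_tendsto_of_tendsto_of_le_of_le' tendsto_const_nhds hδ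
    (.of_forall fun _ => zero_le) ?_
  filter_upwards [eventually_ge_atTop k] with m hkm
  exact (measure_mono (dyadicMismatch_mono (hkm.trans m.le_succ) _)).trans (hn m).le

/-- Lemma `RigidityDiagonalization`.
Let `α` be a cocycle on the invertible `ℤ`-system `(Y, ν, S)`, `D_k` the dyadic partition
of `I`, `P_k = {Y × E : E ∈ D_k}` and `μ_y = δ_y ⊗ m`.  If for every `k ≥ 1` and `ε > 0`,
`ν`-almost every `y` satisfies `dist_{μ_y}(P_k, T_α^{-n} P_k) < ε` for infinitely many `n`,
then `α` is a rigid cocycle. -/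
theorem rigidity_diagonalization
    {Y : Type*} [MeasurableSpace Y] [StandardBorelSpace Y]
    (ν : Measure Y) [IsProbabilityMeasure ν]
    (S : Y ≃ᵐ Y) (hS : MeasurePreserving S ν ν)
    (α : Y → AutI) (hα : Measurable (skewMap (⇑S) α))
    (hyp : ∀ k : ℕ, 1 ≤ k → ∀ ε : ℝ, 0 < ε →
      ν {y : Y |
        {n : ℕ |
          partDist ((Measure.dirac y).prod volume)
            (fun p : Y × unitInterval => dyadicLabel k p.2)
            (fun p : Y × unitInterval => dyadicLabel k (((skewMap (⇑S) α)^[n] p).2)) <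
          ENNReal.ofReal ε}.Infinite} = 1) :
    IsRigidCocycle (⇑S) ν α :=
  rigidity_diagonalization_general ν S α hα hyp
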